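/- Let w and v be words on the primed alphabet [n]' with w ≡_k v, and let t be any letter of [n]'. Then wt ≡_k vt, i.e. shifted Knuth equivalence is preserved by appending a letter on the right. -/

import Mathlib

/- # Shifted tableaux, words, shifted Knuth equivalence, and the
     Gillespie–Levinson–Purbhoo shifted tableau crystal -/

open scoped Classical

namespace ST

/-- A letter `i` or `i'` of the primed alphabet: `val` is `i`, `primed` tells whether it is `i'`. -/
structure PLetter where
  val : ℕ
  primed : Bool
deriving DecidableEq

/-- A word (string) in the primed alphabet. -/
abbrev Word := List PLetter

/-- A (skew) shifted filling: an `Option`-valued assignment on the grid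
(rows and columns indexed from `0`); `none` means "no box". -/
abbrev Tab := ℕ → ℕ → Option PLetter

def dummy : PLetter := ⟨0, false⟩

/-- The strict order `1' < 1 < 2' < 2 < ⋯` on the primed alphabet (Bool-valued). -/
def pltb (a b : PLetter) : Bool :=
  decide (a.val < b.val) || (decide (a.val = b.val) && a.primed && !b.primed)

/-- The strict order `1' < 1 < 2' < 2 < ⋯` on the primed alphabet. -/
def plt (a b : PLetter) : Prop := pltb a b = true

/-- The standardization order on letters-with-positions: equal primed letters are
read right-to-left, equal unprimed letters left-to-right (Bool-valued). -/
def sLTb (p q : PLetter × ℕ) : Bool :=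
  pltb p.1 q.1 ||
    (decide (p.1 = q.1) &&
      ((p.1.primed && decide (q.2 < p.2)) || (!p.1.primed && decide (p.2 < q.2))))

/-- The standardization order on letters-with-positions. -/
def sLT (p q : PLetter × ℕ) : Prop := sLTb p q = true

/-- The standardization of a word: position `i` receives rank
`1 +` the number of positions standardization-smaller than it. -/
def stdOf (w : Word) : List ℕ :=
  (List.range w.length).map (fun i =>
    ((List.range w.length).filter
      (fun j => sLTb (w.getD j dummy, j) (w.getD i dummy, i))).length + 1)

/-- The weight of a word: the number of letters equal to `v` or `v'`. -/
def wtw (w : Word) (v : ℕ) : ℕ := (w.filter (fun a => a.val == v)).length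

/-- Canonical form of a string: the first occurrence of each value is unprimed. -/
def canonize (w : Word) : Word :=
  w.mapIdx (fun idx a =>
    if List.findIdx (fun x => x.val == a.val) w = idx then ⟨a.val, false⟩ else a)

/-! ## Shifted Knuth equivalence -/

/-- The Knuth moves (K1), (K2) (conditions in the standardization order, which for equal
letters is determined by the relative positions in the pattern). -/
inductive KMoveK : Word → Word → Prop
  | K1 (x y : Word) (a b c : PLetter)
      (h1 : sLT (a, 1) (b, 0)) (h2 : sLT (b, 0) (c, 2)) :
      KMoveK (x ++ [b, a, c] ++ y) (x ++ [b, c, a] ++ y)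
  | K2 (x y : Word) (a b c : PLetter)
      (h1 : sLT (a, 0) (b, 2)) (h2 : sLT (b, 2) (c, 1)) :
      KMoveK (x ++ [a, c, b] ++ y) (x ++ [c, a, b] ++ y)

/-- All shifted Knuth moves: (K1), (K2), and the initial moves (S1), (S2). -/
inductive KMove : Word → Word → Prop
  | ofK {w v : Word} : KMoveK w v → KMove w v
  | S1 (y : Word) (a b : PLetter) : KMove (a :: b :: y) (b :: a :: y)
  | S2 (y : Word) (v : ℕ) :
      KMove (⟨v, false⟩ :: ⟨v, false⟩ :: y) (⟨v, false⟩ :: ⟨v, true⟩ :: y)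

/-- Shifted Knuth equivalence of words. -/
inductive KnuthEquiv : Word → Word → Prop
  | refl (w : Word) : KnuthEquiv w w
  | move {w v : Word} : KMove w v → KnuthEquiv w v
  | symm {w v : Word} : KnuthEquiv w v → KnuthEquiv v w
  | trans {w u v : Word} : KnuthEquiv w u → KnuthEquiv u v → KnuthEquiv w v

/-- Equivalence generated by the moves (K1) and (K2) only. -/
inductive KnuthEquivK : Word → Word → Prop
  | refl (w : Word) : KnuthEquivK w w
  | move {w v : Word} : KMoveK w v → KnuthEquivK w v
  | symm {w v : Word} : KnuthEquivK w v → KnuthEquivK v w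
  | trans {w u v : Word} : KnuthEquivK w u → KnuthEquivK u v → KnuthEquivK w v

/-! ## Shifted shapes and tableaux -/

/-- A strict partition, as a strictly decreasing list of positive integers. -/
def StrictPart (l : List ℕ) : Prop := l.Chain' (· > ·) ∧ ∀ x ∈ l, 0 < x

/-- Containment of strict partitions. -/
def SubShape (mu lam : List ℕ) : Prop := ∀ k, mu.getD k 0 ≤ lam.getD k 0

/-- The cells of the skew shifted shape `lam/mu` (`0`-indexed; row `i` is shifted `i`
units to the right). -/
def inC (lam mu : List ℕ) (i j : ℕ) : Prop :=
  i + mu.getD i 0 ≤ j ∧ j < i + lam.getD i 0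

instance (lam mu : List ℕ) (i j : ℕ) : Decidable (inC lam mu i j) := by
  unfold inC; infer_instance

/-- The weight of a filling: the number of boxes filled with `v` or `v'`. -/
noncomputable def wtT (T : Tab) (v : ℕ) : ℕ := Set.ncard {p : ℕ × ℕ | ∃ b, T p.1 p.2 = some ⟨v, b⟩}

/-- `p` comes strictly before `q` in reading order (rows bottom to top,
left to right within a row). -/
def readBef (p q : ℕ × ℕ) : Prop := q.1 < p.1 ∨ (p.1 = q.1 ∧ p.2 < q.2)

/-- `T` is a shifted semistandard tableau of shape `lam/mu` on the alphabet `[n]'`,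
in canonical form: boxes exactly on the cells of `lam/mu`; values between `1` and `n`;
rows and columns weakly increase, with at most one `i'` per row (equal row-adjacent
entries are unprimed) and at most one `i` per column (equal column-adjacent entries
are primed); and the first occurrence of each value in reading order is unprimed. -/
def IsShST (lam mu : List ℕ) (n : ℕ) (T : Tab) : Prop :=
  (∀ i j, T i j ≠ none ↔ inC lam mu i j) ∧
  (∀ i j a, T i j = some a → 1 ≤ a.val ∧ a.val ≤ n) ∧
  (∀ i j a b, T i j = some a → T i (j+1) = some b → plt a b ∨ (a = b ∧ a.primed = false)) ∧
  (∀ i j a b, T i j = some a → T (i+1) j = some b → plt a b ∨ (a = b ∧ a.primed = true)) ∧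
  (∀ i j v, T i j = some ⟨v, true⟩ →
    ∃ p : ℕ × ℕ, ∃ b, readBef p (i, j) ∧ T p.1 p.2 = some ⟨v, b⟩)

/-- The Yamanouchi tableau `Y_ν`: row `i` is filled with unprimed `i`'s (rows `1`-indexed). -/
def Yam (nu : List ℕ) : Tab := fun i j =>
  if inC nu [] i j then some ⟨i + 1, false⟩ else none

/-- The cells of `lam/mu` listed in reading order (bottom row first, left to right). -/
def readCells (lam mu : List ℕ) : List (ℕ × ℕ) :=
  ((List.range lam.length).reverse).foldr
    (fun i acc =>
      ((List.range' (i + mu.getD i 0) (lam.getD i 0 - mu.getD i 0)).map (fun j => (i, j)))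
        ++ acc) []

/-- The (row) reading word of a tableau of shape `lam/mu`. -/
def readWordT (lam mu : List ℕ) (T : Tab) : Word :=
  (readCells lam mu).filterMap (fun p => T p.1 p.2)

/-- The reading word of any filling supported in the square `[0,B)²`
(rows bottom to top, left to right). -/
def readWordB (B : ℕ) (T : Tab) : Word :=
  ((List.range B).reverse).foldr
    (fun i acc => ((List.range B).filterMap (fun j => T i j)) ++ acc) []

/-- Refill the shape `lam/mu` with a given word, in reading order. -/
def fillTab (lam mu : List ℕ) (w : Word) : Tab := fun i j =>
  if inC lam mu i j then w[(readCells lam mu).idxOf (i, j)]? else none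

/-! ## Primed crystal operators (on words, then on tableaux) -/

/-- The primed lowering operator `F_i'` on words: the unique word in canonical form with
the same standardization and weight decreased by `α_i = e_i - e_{i+1}`. -/
noncomputable def FpW (i : ℕ) (w : Word) : Option Word :=
  if h : ∃ v : Word, canonize v = v ∧ stdOf v = stdOf w ∧
      (∀ x, wtw v x =
        if x = i then wtw w x - 1 else if x = i + 1 then wtw w x + 1 else wtw w x) ∧
      1 ≤ wtw w i
  then some h.choose else none

/-- The primed raising operator `E_i'` on words. -/
noncomputable def EpW (i : ℕ) (w : Word) : Option Word :=
  if h : ∃ v : Word, canonize v = v ∧ stdOf v = stdOf w ∧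
      (∀ x, wtw v x =
        if x = i then wtw w x + 1 else if x = i + 1 then wtw w x - 1 else wtw w x) ∧
      1 ≤ wtw w (i + 1)
  then some h.choose else none

/-! ## Lattice walks and the unprimed operators -/

/-- One step of the lattice walk, for a letter of `{1',1,2',2}`. -/
def wstep (p : ℕ × ℕ) (a : PLetter) : ℕ × ℕ :=
  if p.1 = 0 ∨ p.2 = 0 then
    if a.val = 1 then (p.1 + 1, p.2) else (p.1, p.2 + 1)
  else
    if a.val = 1 then (if a.primed then (p.1 + 1, p.2) else (p.1, p.2 - 1))
    else (if a.primed then (p.1 - 1, p.2) else (p.1, p.2 + 1))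

/-- The position of the lattice walk of `w` before the letter at index `k`. -/
def walkAt (w : Word) (k : ℕ) : ℕ × ℕ := (w.take k).foldl wstep (0, 0)

def l1 : PLetter := ⟨1, false⟩
def l1p : PLetter := ⟨1, true⟩
def l2 : PLetter := ⟨2, false⟩
def l2p : PLetter := ⟨2, true⟩

/-- `w` has an `F₁`-critical substring starting at index `k`, of length `len`, and
transforming it yields `res` (`res = none` for type 5F). The five types
(patterns, locations and transformations) follow Gillespie–Levinson–Purbhoo. -/
def FcritRes (w : Word) (k len : ℕ) (res : Option Word) : Prop :=
  -- type 1F : 1(1')ᵗ2' ↦ 2'(1')ᵗ2, located at y = 0, or y = 1 with x ≥ 1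
  (∃ t, (w.drop k).take len = l1 :: (List.replicate t l1p ++ [l2p]) ∧ len = t + 2 ∧
      ((walkAt w k).2 = 0 ∨ ((walkAt w k).2 = 1 ∧ 1 ≤ (walkAt w k).1)) ∧
      res = some (w.take k ++ (l2p :: (List.replicate t l1p ++ [l2])) ++ w.drop (k + len))) ∨
  -- type 2F : 1(2)ᵗ1' ↦ 2'(2)ᵗ1, located at x = 0, or x = 1 with y ≥ 1
  (∃ t, (w.drop k).take len = l1 :: (List.replicate t l2 ++ [l1p]) ∧ len = t + 2 ∧
      ((walkAt w k).1 = 0 ∨ ((walkAt w k).1 = 1 ∧ 1 ≤ (walkAt w k).2)) ∧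
      res = some (w.take k ++ (l2p :: (List.replicate t l2 ++ [l1])) ++ w.drop (k + len))) ∨
  -- type 3F : 1 ↦ 2, located at y = 0
  ((w.drop k).take len = [l1] ∧ len = 1 ∧ (walkAt w k).2 = 0 ∧
      res = some (w.take k ++ [l2] ++ w.drop (k + 1))) ∨
  -- type 4F : 1' ↦ 2', located at x = 0
  ((w.drop k).take len = [l1p] ∧ len = 1 ∧ (walkAt w k).1 = 0 ∧
      res = some (w.take k ++ [l2p] ++ w.drop (k + 1))) ∨
  -- type 5F : a single 1 or 2' located at x = 1, y ≥ 1; the operator is undefined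
  (((w.drop k).take len = [l1] ∨ (w.drop k).take len = [l2p]) ∧ len = 1 ∧
      (walkAt w k).1 = 1 ∧ 1 ≤ (walkAt w k).2 ∧ res = none)

/-- `p = (v, k, len, res)` is a *final* `F₁`-critical substring for the word `w`:
`v` is a representative of `w`, with an `F₁`-critical substring at `k` of length `len`,
of maximal starting index, and longest among those. -/
def FinalCrit (w : Word) (p : Word × ℕ × ℕ × Option Word) : Prop :=
  canonize p.1 = w ∧ FcritRes p.1 p.2.1 p.2.2.1 p.2.2.2 ∧
  ∀ q : Word × ℕ × ℕ × Option Word,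
    canonize q.1 = w → FcritRes q.1 q.2.1 q.2.2.1 q.2.2.2 →
      (q.2.1 < p.2.1 ∨ (q.2.1 = p.2.1 ∧ q.2.2.1 ≤ p.2.2.1))

/-- The unprimed lowering operator `F₁` on words in the alphabet `{1',1,2',2}`. -/
noncomputable def F1 (w : Word) : Option Word :=
  if h : ∃ p : Word × ℕ × ℕ × Option Word, FinalCrit w p
  then h.choose.2.2.2.map canonize else none

/-- Is `a` a letter of `{i, i', i+1, (i+1)'}`? -/
def isCol (i : ℕ) (a : PLetter) : Bool := a.val == i || a.val == i + 1

/-- Relabel `{i,i+1}' → {1,2}'`. -/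
def toCol (i : ℕ) (a : PLetter) : PLetter := ⟨a.val + 1 - i, a.primed⟩

/-- Relabel `{1,2}' → {i,i+1}'`. -/
def fromCol (i : ℕ) (a : PLetter) : PLetter := ⟨a.val + i - 1, a.primed⟩

/-- The subword of letters `i, i', i+1, (i+1)'`, relabelled to the alphabet `{1,2}'`. -/
def subw (i : ℕ) (w : Word) : Word := (w.filter (isCol i)).map (toCol i)

/-- Replace, in order, the letters of colour `{i,i+1}` of the first word by
the (relabelled) letters of the second word. -/
def reinsert (i : ℕ) : Word → Word → Word
  | [], _ => []
  | a :: w, s =>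
      if isCol i a then
        match s with
        | [] => a :: reinsert i w []
        | b :: s' => fromCol i b :: reinsert i w s'
      else a :: reinsert i w s

/-- The unprimed lowering operator `F_i` on words. -/
noncomputable def FW (i : ℕ) (w : Word) : Option Word :=
  (F1 (subw i w)).map (fun s => canonize (reinsert i w s))

/-- Complementation of a word in the alphabet `{1,2}'`. -/
def compl2 (w : Word) : Word := w.map (fun a => ⟨3 - a.val, !a.primed⟩)

/-- The unprimed raising operator `E₁ = c₂ ∘ F₁ ∘ c₂` on words in `{1,2}'`. -/
noncomputable def E1 (w : Word) : Option Word :=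
  (F1 (canonize (compl2 w))).map (fun u => canonize (compl2 u))

/-- The unprimed raising operator `E_i` on words. -/
noncomputable def EW (i : ℕ) (w : Word) : Option Word :=
  (E1 (subw i w)).map (fun s => canonize (reinsert i w s))

/-! ## The shifted tableau crystal `B(λ/μ, n)` -/

/-- The unprimed lowering operator `F_i` on tableaux of shape `lam/mu`. -/
noncomputable def FT (lam mu : List ℕ) (i : ℕ) (T : Tab) : Option Tab :=
  (FW i (readWordT lam mu T)).map (fillTab lam mu)

/-- The primed lowering operator `F_i'` on tableaux of shape `lam/mu`. -/
noncomputable def FpT (lam mu : List ℕ) (i : ℕ) (T : Tab) : Option Tab :=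
  (FpW i (readWordT lam mu T)).map (fillTab lam mu)

/-- The unprimed raising operator `E_i` on tableaux of shape `lam/mu`. -/
noncomputable def ET (lam mu : List ℕ) (i : ℕ) (T : Tab) : Option Tab :=
  (EW i (readWordT lam mu T)).map (fillTab lam mu)

/-- The primed raising operator `E_i'` on tableaux of shape `lam/mu`. -/
noncomputable def EpT (lam mu : List ℕ) (i : ℕ) (T : Tab) : Option Tab :=
  (EpW i (readWordT lam mu T)).map (fillTab lam mu)

/-- An `{i,i'}`-coloured edge of the crystal (in either direction). -/
def edge (lam mu : List ℕ) (i : ℕ) (T U : Tab) : Prop :=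
  FT lam mu i T = some U ∨ FpT lam mu i T = some U ∨
  FT lam mu i U = some T ∨ FpT lam mu i U = some T

/-- `T` and `U` lie in the same `i`-string. -/
def iStr (lam mu : List ℕ) (i : ℕ) : Tab → Tab → Prop :=
  Relation.ReflTransGen (edge lam mu i)

/-- `T` and `U` lie in the same connected component of `B(λ/μ, n)`. -/
def Comp (lam mu : List ℕ) (n : ℕ) : Tab → Tab → Prop :=
  Relation.ReflTransGen (fun T U => ∃ i, 1 ≤ i ∧ i < n ∧ edge lam mu i T U)

/-- `T` and `U` lie in the same connected component of `B_{p,q}`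
(edges coloured in `[p, q-1]` only). -/
def CompPQ (lam mu : List ℕ) (p q : ℕ) : Tab → Tab → Prop :=
  Relation.ReflTransGen (fun T U => ∃ i, p ≤ i ∧ i < q ∧ edge lam mu i T U)

/-- The `i`-string through `T` is collapsed: the operators `F_i` and `F_i'`
coincide along it. -/
def CollapsedStr (lam mu : List ℕ) (i : ℕ) (T : Tab) : Prop :=
  ∀ U, iStr lam mu i T U → FT lam mu i U = FpT lam mu i U

/-- The `i`-string through `T` is separated: it consists of two `i`-labelled chains
connected by `i'`-labelled edges; equivalently, some `i'`-edge of the string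
is not an `i`-edge. -/
def SeparatedStr (lam mu : List ℕ) (i : ℕ) (T : Tab) : Prop :=
  ∃ U V, iStr lam mu i T U ∧ FpT lam mu i U = some V ∧ FT lam mu i U ≠ some V

/-- Iterates of a partial operator. -/
def iterO (f : Tab → Option Tab) : ℕ → Tab → Option Tab
  | 0, T => some T
  | k + 1, T => (iterO f k T).bind f

/-- Partial length function: the largest `k` such that the `k`-th iterate is defined. -/
noncomputable def plen (f : Tab → Option Tab) (T : Tab) : ℕ :=
  sSup {k | iterO f k T ≠ none}

/-- The total length function `φ_i(T)`: the `x`-coordinate of the endpoint of the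
`i`-th lattice walk of the reading word of `T`. -/
def phiTot (lam mu : List ℕ) (i : ℕ) (T : Tab) : ℕ :=
  ((subw i (readWordT lam mu T)).foldl wstep (0, 0)).1

/-- The total length function `ε_i(T)`: the `y`-coordinate of the endpoint of the
`i`-th lattice walk of the reading word of `T`. -/
def epsTot (lam mu : List ℕ) (i : ℕ) (T : Tab) : ℕ :=
  ((subw i (readWordT lam mu T)).foldl wstep (0, 0)).2

/-! ## The Schützenberger involution and evacuation -/

/-- Complementation of a letter within `[n]'`. -/
def compln (n : ℕ) (a : PLetter) : PLetter := ⟨n + 1 - a.val, !a.primed⟩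

/-- The operator `c_n`: flip across the anti-diagonal of the ambient staircase
(of size `N`) while complementing the entries within `[n]'`. -/
def cnT (n N : ℕ) (T : Tab) : Tab := fun i j =>
  if i < N ∧ j < N then (T (N - 1 - j) (N - 1 - i)).map (compln n) else none

/-- The shifted evacuation `evac(T) = rect(c_n(T))` of a straight-shape tableau
living inside the staircase of size `N`: the unique straight-shape shifted
semistandard tableau whose reading word is shifted Knuth equivalent to that
of `c_n(T)`. -/
noncomputable def evac (n N : ℕ) (T : Tab) : Tab :=
  Classical.epsilon (fun U => ∃ nu : List ℕ, StrictPart nu ∧ nu.headD 0 ≤ N ∧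
    nu.length ≤ N ∧ IsShST nu [] n U ∧
    KnuthEquiv (canonize (readWordB N U)) (canonize (readWordB N (cnT n N T))))

/-- The characterizing properties of the Schützenberger (Lusztig) involution `η`
on `B(λ/μ, n)`: it maps the crystal to itself, intertwines `E_i, E_i', F_i, F_i'`
with `F_{n-i}, F_{n-i}', E_{n-i}, E_{n-i}'`, and reverses the weight. -/
def EtaProps (lam mu : List ℕ) (n : ℕ) (η : Tab → Tab) : Prop :=
  ∀ T, IsShST lam mu n T →
    IsShST lam mu n (η T) ∧
    (∀ i, 1 ≤ i → i < n →
      EpT lam mu i (η T) = (FpT lam mu (n - i) T).map η ∧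
      ET lam mu i (η T) = (FT lam mu (n - i) T).map η ∧
      FpT lam mu i (η T) = (EpT lam mu (n - i) T).map η ∧
      FT lam mu i (η T) = (ET lam mu (n - i) T).map η) ∧
    (∀ v, 1 ≤ v → v ≤ n → wtT (η T) v = wtT T (n + 1 - v))

/-- The global specification of the Schützenberger involution for the alphabet `[n]'`. -/
def etaSpec (n : ℕ) (η : Tab → Tab) : Prop :=
  ∀ lam mu : List ℕ, StrictPart lam → StrictPart mu → SubShape mu lam →
    EtaProps lam mu n η

/-- The Schützenberger involution `η` for the alphabet `[n]'`
(evacuation on straight shapes, reversal on skew shapes). -/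
noncomputable def eta (n : ℕ) : Tab → Tab := Classical.epsilon (etaSpec n)

/-- The subtableau `T^{p,q}` of entries with values in `[p,q]`, relabelled to `[q-p+1]'`. -/
def restrictT (p q : ℕ) (T : Tab) : Tab := fun i j =>
  (T i j).bind (fun a =>
    if p ≤ a.val ∧ a.val ≤ q then some ⟨a.val + 1 - p, a.primed⟩ else none)

/-- The restriction `η_{p,q}` of the Schützenberger involution to the primed interval
`[p,q]'`: apply `η` (for the alphabet `[q-p+1]'`) to `T^{p,q}` and leave the other
entries unchanged. -/
noncomputable def etaPQ (p q : ℕ) (T : Tab) : Tab := fun i j =>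
  match T i j with
  | none => none
  | some a =>
      if p ≤ a.val ∧ a.val ≤ q then
        (eta (q + 1 - p) (restrictT p q T) i j).map (fun b => ⟨b.val + p - 1, b.primed⟩)
      else some a

/-! ## The shifted crystal reflection operators -/

/-- The shifted crystal reflection operator `σ_i` (as a partial operator),
with `k = ⟨wt(T), α_i⟩`. -/
noncomputable def sigmaO (lam mu : List ℕ) (i : ℕ) (T : Tab) : Option Tab :=
  let k : ℤ := (wtT T i : ℤ) - (wtT T (i + 1) : ℤ)
  if 0 < k then
    if (FpT lam mu i T).isSome then (iterO (FT lam mu i) (k - 1).toNat T).bind (FpT lam mu i)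
    else (iterO (FT lam mu i) (k + 1).toNat T).bind (EpT lam mu i)
  else if k = 0 then
    if (FpT lam mu i T).isSome then (FpT lam mu i T).bind (ET lam mu i)
    else if (FT lam mu i T).isSome then (FT lam mu i T).bind (EpT lam mu i)
    else some T
  else
    if (FpT lam mu i T).isSome then (FpT lam mu i T).bind (iterO (ET lam mu i) (-k + 1).toNat)
    else (EpT lam mu i T).bind (iterO (ET lam mu i) (-k - 1).toNat)

/-- The shifted crystal reflection operator `σ_i` on `B(λ/μ, n)`. -/
noncomputable def sigmaT (lam mu : List ℕ) (i : ℕ) (T : Tab) : Tab :=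
  (sigmaO lam mu i T).getD T

/-- The longest permutation of the interval `[a,b]`, as a function. -/
def theta (a b : ℕ) (i : ℕ) : ℕ := if a ≤ i ∧ i ≤ b then a + b - i else i

theorem KMoveK.append_right {w v : Word} (h : KMoveK w v) (u : Word) :
    KMoveK (w ++ u) (v ++ u) := by
  cases h with
  | K1 x y a b c h1 h2 => simpa only [List.append_assoc] using KMoveK.K1 x (y ++ u) a b c h1 h2
  | K2 x y a b c h1 h2 => simpa only [List.append_assoc] using KMoveK.K2 x (y ++ u) a b c h1 h2

theorem KMove.append_right {w v : Word} (h : KMove w v) (u : Word) :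
    KMove (w ++ u) (v ++ u) := by
  cases h with
  | ofK hk => exact .ofK (hk.append_right u)
  | S1 y a b => exact .S1 (y ++ u) a b
  | S2 y x => exact .S2 (y ++ u) x

theorem KnuthEquiv.append_right {w v : Word} (h : KnuthEquiv w v) (u : Word) :
    KnuthEquiv (w ++ u) (v ++ u) := by
  induction h with
  | refl w => exact .refl _
  | move hm => exact .move (hm.append_right u)
  | symm _ ih => exact ih.symm
  | trans _ _ ih₁ ih₂ => exact ih₁.trans ih₂

theorem knuth_append_right_general (w v : Word) (t : PLetter)
    (h : KnuthEquiv w v) : KnuthEquiv (w ++ [t]) (v ++ [t]) :=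
  h.append_right [t]

/-- Let `w` and `v` be words on the primed alphabet `[n]'` with
`w ≡_k v`, and let `t` be any letter of `[n]'`. Then `wt ≡_k vt`: shifted Knuth
equivalence is preserved by appending a letter on the right. -/
theorem knuth_append_right (n : ℕ) (w v : Word) (t : PLetter)
    (hw : ∀ a ∈ w, 1 ≤ a.val ∧ a.val ≤ n) (hv : ∀ a ∈ v, 1 ≤ a.val ∧ a.val ≤ n)
    (ht : 1 ≤ t.val ∧ t.val ≤ n)
    (h : KnuthEquiv w v) : KnuthEquiv (w ++ [t]) (v ++ [t]) :=
  knuth_append_right_general w v t h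

end ST
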